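/- Let k ≥ 3 be an integer, let l be any integer, and let s be an integer with 1 ≤ s ≤ k−1. Then the image under η of the kernel of η_s equals the subgroup gcd(s, k−s)·ℤ of ℤ; that is, { η(α) : α ∈ ℤ^k, η_s(α) = 0 } = gcd(s, k−s)·ℤ. -/

import Mathlib

/-- `modK k i` is reduction of `i` modulo `k` taking values in `{1, …, k}`:
integers divisible by `k` are sent to `k` rather than `0`. -/
def modK (k : ℕ) (i : ℤ) : ℤ := (i - 1) % (k : ℤ) + 1

/-- `eta k l α = Σ_{i=1}^k (l + mod_k(i)) · α_i` on `ℤ^k = (Fin k → ℤ)`,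
where the `i`-th standard basis vector corresponds to the index `i ∈ {1, …, k}`. -/
def eta (k : ℕ) (l : ℤ) (α : Fin k → ℤ) : ℤ :=
  ∑ i : Fin k, (l + modK k ((i : ℤ) + 1)) * α i

/-- `etaS k l s α = Σ_{i=1}^k (l + mod_k(i + s)) · α_i`. -/
def etaS (k : ℕ) (l s : ℤ) (α : Fin k → ℤ) : ℤ :=
  ∑ i : Fin k, (l + modK k ((i : ℤ) + 1 + s)) * α i

/-!
Both forms are dot products with the coefficient vectors `c_t i = l + mod_k (i + t)`, `t = 0, s`,
and `c_0 - c_s ≡ -s [ZMOD k]` coordinatewise, so on the kernel of `η_s` the value of `η` is a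
multiple of `gcd(s, k) = gcd(s, k - s)`. Conversely, wherever `c_0` and `c_s` both go up by one
from index `i` to `i + 1`, the kernel vector `c_s (i + 1) e_i - c_s i e_{i + 1}` has `η`-value
`c_0 i - c_s i`. At the first index this is `-s` (when `s ≤ k - 2`), at index `k - s + 1` it is
`k - s` (when `2 ≤ s`), and Bézout finishes; for `s = 1` or `s = k - 1` one of them is `±1`.
-/

open Matrix

section ImageKer

variable {ι R : Type*} [Fintype ι] [CommRing R]

def imageKer (u v : ι → R) : Ideal R :=
  (LinearMap.ker (dotProductBilin R R v)).map (dotProductBilin R R u)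

theorem mem_imageKer {u v : ι → R} {x : R} :
    x ∈ imageKer u v ↔ ∃ α, v ⬝ᵥ α = 0 ∧ u ⬝ᵥ α = x :=
  Iff.rfl

theorem dotProduct_single_sub_single [DecidableEq ι] (u v : ι → R) (i j : ι) :
    u ⬝ᵥ (Pi.single i (v j) - Pi.single j (v i)) = u i * v j - u j * v i := by
  rw [dotProduct_sub, dotProduct_single, dotProduct_single]

/-- The witness is the kernel vector `v j • e i - v i • e j` of `v`. -/
theorem sub_mem_imageKer_of_succ {u v : ι → R} {i j : ι} (hu : u j = u i + 1)
    (hv : v j = v i + 1) : u i - v i ∈ imageKer u v := by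
  classical
  refine mem_imageKer.2 ⟨Pi.single i (v j) - Pi.single j (v i), ?_, ?_⟩
  · rw [dotProduct_single_sub_single, mul_comm, sub_self]
  · rw [dotProduct_single_sub_single, hu, hv]
    ring

theorem dvd_of_mem_imageKer {u v : ι → R} {d x : R} (hd : ∀ i, d ∣ u i - v i)
    (hx : x ∈ imageKer u v) : d ∣ x := by
  obtain ⟨α, hv, rfl⟩ := mem_imageKer.1 hx
  rw [← sub_zero (u ⬝ᵥ α), ← hv, ← sub_dotProduct]
  exact Finset.dvd_sum fun i _ => (hd i).mul_right _

end ImageKer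

theorem modK_eq_self {k : ℕ} {a : ℤ} (h1 : 1 ≤ a) (h2 : a ≤ k) : modK k a = a := by
  rw [modK, Int.emod_eq_of_lt (by omega) (by omega), sub_add_cancel]

theorem modK_add_self (k : ℕ) (a : ℤ) : modK k (a + k) = modK k a := by
  rw [modK, modK, add_sub_right_comm, Int.add_emod_right]

theorem modK_modEq (k : ℕ) (a : ℤ) : modK k a ≡ a [ZMOD k] := by
  simpa only [modK, sub_add_cancel] using (Int.mod_modEq (a - 1) k).add_right 1

def etaCoeff (k : ℕ) (l t : ℤ) (i : Fin k) : ℤ := l + modK k ((i : ℤ) + 1 + t)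

theorem eta_eq_dotProduct (k : ℕ) (l : ℤ) (α : Fin k → ℤ) :
    eta k l α = etaCoeff k l 0 ⬝ᵥ α := by
  simp only [eta, etaCoeff, dotProduct, add_zero]

theorem etaS_eq_dotProduct (k : ℕ) (l s : ℤ) (α : Fin k → ℤ) :
    etaS k l s α = etaCoeff k l s ⬝ᵥ α := rfl

theorem etaCoeff_sub_self (k : ℕ) (l t : ℤ) : etaCoeff k l (t - k) = etaCoeff k l t := by
  funext i
  rw [etaCoeff, etaCoeff, ← modK_add_self, add_assoc _ (t - k), sub_add_cancel]

theorem etaCoeff_sub_etaCoeff_modEq (k : ℕ) (l t s : ℤ) (i : Fin k) :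
    etaCoeff k l t i - etaCoeff k l s i ≡ t - s [ZMOD k] := by
  simpa only [etaCoeff, add_sub_add_left_eq_sub] using
    (modK_modEq k ((i : ℤ) + 1 + t)).sub (modK_modEq k ((i : ℤ) + 1 + s))

theorem sub_mem_imageKer_etaCoeff {k : ℕ} (l t s i : ℤ) (hi₀ : 0 ≤ i) (hi : i + 1 < k)
    (ht₀ : 0 ≤ i + t) (ht : i + t + 2 ≤ k) (hs₀ : 0 ≤ i + s) (hs : i + s + 2 ≤ k) :
    t - s ∈ imageKer (etaCoeff k l t) (etaCoeff k l s) := by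
  have hcast : ((i.toNat : ℕ) : ℤ) = i := Int.toNat_of_nonneg hi₀
  have key := sub_mem_imageKer_of_succ (u := etaCoeff k l t) (v := etaCoeff k l s)
    (i := ⟨i.toNat, by omega⟩) (j := ⟨i.toNat + 1, by omega⟩)
  simp (disch := omega) only [etaCoeff, Nat.cast_add, Nat.cast_one, hcast, modK_eq_self] at key
  convert key (by ring) (by ring) using 1
  ring

theorem setOf_etaS_eq_zero_eta_eq (k : ℕ) (l s : ℤ) :
    {x : ℤ | ∃ α : Fin k → ℤ, etaS k l s α = 0 ∧ eta k l α = x}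
      = imageKer (etaCoeff k l 0) (etaCoeff k l s) := by
  ext x
  simp only [eta_eq_dotProduct, etaS_eq_dotProduct]
  rfl

theorem dvd_of_mem_imageKer_etaCoeff {k : ℕ} {l t s d x : ℤ} (hdk : d ∣ k) (hd : d ∣ t - s)
    (hx : x ∈ imageKer (etaCoeff k l t) (etaCoeff k l s)) : d ∣ x :=
  dvd_of_mem_imageKer (fun i => ((etaCoeff_sub_etaCoeff_modEq k l t s i).of_dvd hdk).dvd_iff.2 hd)
    hx

/-- The Claim in Mashiko's proof: for `k ≥ 3`, any `l`, and `1 ≤ s ≤ k − 1`,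
the image under `η` of the kernel of `η_s` is exactly `gcd(s, k−s) · ℤ`. -/
theorem eta_image_ker_etaS (k : ℕ) (hk : 3 ≤ k) (l s : ℤ)
    (hs1 : 1 ≤ s) (hs2 : s ≤ (k : ℤ) - 1) :
    {x : ℤ | ∃ α : Fin k → ℤ, etaS k l s α = 0 ∧ eta k l α = x}
      = {x : ℤ | (Int.gcd s ((k : ℤ) - s) : ℤ) ∣ x} := by
  rw [setOf_etaS_eq_zero_eta_eq]
  set g : ℤ := (Int.gcd s ((k : ℤ) - s) : ℤ)
  set I := imageKer (etaCoeff k l 0) (etaCoeff k l s)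
  have hgs : g ∣ s := Int.gcd_dvd_left s _
  have hgk : g ∣ k := by simpa using dvd_add hgs (Int.gcd_dvd_right s ((k : ℤ) - s))
  have neg_s_mem : s ≤ k - 2 → -s ∈ I := fun h => by
    simpa using sub_mem_imageKer_etaCoeff (k := k) l 0 s 0 le_rfl (by omega) le_rfl (by omega)
      (by omega) (by omega)
  -- shifting `s` by `-k` removes the wrap-around of `mod_k` at the index `k - s`
  have k_sub_s_mem : 2 ≤ s → k - s ∈ I := fun h => by
    have := sub_mem_imageKer_etaCoeff (k := k) l 0 (s - k) (k - s) (by omega) (by omega) (by omega)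
      (by omega) (by omega) (by omega)
    rwa [etaCoeff_sub_self, zero_sub, neg_sub] at this
  have hg : g ∈ I := by
    rcases eq_or_lt_of_le hs1 with rfl | hs1
    · simpa [g] using neg_mem (neg_s_mem (by omega))
    rcases eq_or_lt_of_le hs2 with rfl | hs2
    · simpa [g] using k_sub_s_mem (by omega)
    rw [show g = _ from Int.gcd_eq_gcd_ab s (k - s)]
    exact add_mem (I.mul_mem_right _ (by simpa using neg_mem (neg_s_mem (by omega))))
      (I.mul_mem_right _ (k_sub_s_mem (by omega)))
  ext x
  exact ⟨dvd_of_mem_imageKer_etaCoeff hgk (by simpa using hgs),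
    fun ⟨c, hc⟩ => hc ▸ I.mul_mem_right c hg⟩
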